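/- Fix m ≥ 3 and let (A_i)_{i∈ℕ} be i.i.d. uniform random vectors on S^{m-1}, with A^{[n]} the n×m matrix of the first n of them. Then with probability one, 𝒞(A^{[n]}) → 1 as n → ∞. -/

import Mathlib

open Real Set MeasureTheory ProbabilityTheory Filter
open scoped RealInnerProductSpace

noncomputable def thetaA {m n : ℕ} (a : Fin n → EuclideanSpace ℝ (Fin m)) : ℝ :=
  ⨆ x : {x : EuclideanSpace ℝ (Fin m) // x ≠ 0},
    ⨅ i, Real.arccos (⟪a i, (x : EuclideanSpace ℝ (Fin m))⟫ /
      ‖(x : EuclideanSpace ℝ (Fin m))‖)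

noncomputable def condNum {m n : ℕ} (a : Fin n → EuclideanSpace ℝ (Fin m)) : ℝ :=
  |Real.cos (thetaA a)|⁻¹

def IsUniformOnSphere {m : ℕ} (μ : Measure (EuclideanSpace ℝ (Fin m))) : Prop :=
  IsProbabilityMeasure μ ∧ μ (Metric.sphere (0 : EuclideanSpace ℝ (Fin m)) 1)ᶜ = 0 ∧
    ∀ L : EuclideanSpace ℝ (Fin m) ≃ₗᵢ[ℝ] EuclideanSpace ℝ (Fin m), μ.map L = μ


/-!
Almost surely every `A i` is a unit vector and the sequence `(A i)` is dense in the sphere. Indeed,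
if `N` balls of radius `r` centred on the sphere cover it, each such ball has probability at least
`1 / N`, since all of them have the same measure by rotation invariance; by independence, missing a
given ball forever is then a null event, and countably many balls suffice. For a dense sequence of
unit vectors, compactness of the sphere yields, for each `δ > 0`, an `n` such that every unit
vector is within `δ` of one of `A 0, …, A (n - 1)`, whence `θ(A^{[n]}) ≤ arccos (1 - δ² / 2)`.
So `θ(A^{[n]}) → 0` and `𝒞(A^{[n]}) = |cos θ(A^{[n]})|⁻¹ → 1`.
-/

open scoped ENNReal

section Geometry

variable {m : ℕ}

local notation "E" => EuclideanSpace ℝ (Fin m)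

lemma thetaA_nonneg {n : ℕ} (a : Fin n → E) : 0 ≤ thetaA a :=
  Real.iSup_nonneg fun _ => Real.iInf_nonneg fun _ => arccos_nonneg _

lemma thetaA_le_arccos {n : ℕ} (a : Fin n → E) {t : ℝ}
    (h : ∀ y : E, ‖y‖ = 1 → ∃ i, t ≤ ⟪a i, y⟫) : thetaA a ≤ arccos t := by
  refine Real.iSup_le (fun ⟨x, hx⟩ => ?_) (arccos_nonneg t)
  have hx' : ‖x‖ ≠ 0 := norm_ne_zero_iff.2 hx
  obtain ⟨i, hi⟩ := h (‖x‖⁻¹ • x) (by rw [norm_smul, norm_inv, norm_norm, inv_mul_cancel₀ hx'])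
  have hval : ⟪a i, x⟫ / ‖x‖ = ⟪a i, ‖x‖⁻¹ • x⟫ := by
    rw [real_inner_smul_right, div_eq_inv_mul]
  calc ⨅ j, arccos (⟪a j, x⟫ / ‖x‖)
      ≤ arccos (⟪a i, x⟫ / ‖x‖) := ciInf_le ⟨0, by rintro _ ⟨j, rfl⟩; exact arccos_nonneg _⟩ i
    _ ≤ arccos t := by rw [hval]; exact arccos_le_arccos hi

-- For unit vectors, `⟪u, v⟫ = 1 - ‖u - v‖² / 2`.
lemma one_sub_sq_div_two_le_inner {F : Type*} [NormedAddCommGroup F] [InnerProductSpace ℝ F]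
    {u v : F} (hu : ‖u‖ = 1) (hv : ‖v‖ = 1) {δ : ℝ}
    (h : dist u v ≤ δ) : 1 - δ ^ 2 / 2 ≤ ⟪u, v⟫ := by
  have hexp := norm_sub_sq_real u v
  rw [hu, hv, ← dist_eq_norm] at hexp
  nlinarith [dist_nonneg (x := u) (y := v)]

lemma eventually_thetaA_le_arccos {a : ℕ → E} (ha : ∀ i, ‖a i‖ = 1)
    (hdense : Metric.sphere (0 : E) 1 ⊆ closure (range a)) {δ : ℝ} (hδ : 0 < δ) :
    ∀ᶠ n in atTop, thetaA (fun i : Fin n => a i) ≤ arccos (1 - δ ^ 2 / 2) := by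
  obtain ⟨T, hTS, hTfin, hcover⟩ :=
    finite_cover_balls_of_compact (isCompact_sphere (0 : E) 1) (half_pos hδ)
  have hhit : ∀ᶠ n in atTop, ∀ c ∈ T, ∃ i < n, dist (a i) c < δ / 2 := by
    refine (eventually_all_finite hTfin).2 fun c hc => ?_
    obtain ⟨_, ⟨i, rfl⟩, hi⟩ := Metric.mem_closure_iff.1 (hdense (hTS hc)) _ (half_pos hδ)
    filter_upwards [eventually_gt_atTop i] with n hn
    exact ⟨i, hn, by rwa [dist_comm]⟩
  filter_upwards [hhit] with n hn
  refine thetaA_le_arccos _ fun y hy => ?_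
  obtain ⟨c, hc, hyc⟩ := mem_iUnion₂.1 (hcover (mem_sphere_zero_iff_norm.2 hy))
  obtain ⟨i, hin, hic⟩ := hn c hc
  refine ⟨⟨i, hin⟩, one_sub_sq_div_two_le_inner (ha i) hy ?_⟩
  calc dist (a i) y ≤ dist (a i) c + dist y c := dist_triangle_right _ _ _
    _ ≤ δ := by rw [Metric.mem_ball] at hyc; linarith

lemma tendsto_thetaA_zero {a : ℕ → E} (ha : ∀ i, ‖a i‖ = 1)
    (hdense : Metric.sphere (0 : E) 1 ⊆ closure (range a)) :
    Tendsto (fun n => thetaA (fun i : Fin n => a i)) atTop (nhds 0) := by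
  refine tendsto_order.2 ⟨fun ε hε => .of_forall fun n => hε.trans_le (thetaA_nonneg _),
    fun ε hε => ?_⟩
  have hbound : Tendsto (fun δ : ℝ => arccos (1 - δ ^ 2 / 2)) (nhds 0) (nhds 0) := by
    simpa using ((by fun_prop : Continuous fun δ : ℝ => 1 - δ ^ 2 / 2).arccos).tendsto 0
  obtain ⟨δ, hδε, hδ⟩ :=
    (((hbound.mono_left nhdsWithin_le_nhds).eventually (gt_mem_nhds hε)).and
      (self_mem_nhdsWithin (s := Ioi 0))).exists
  filter_upwards [eventually_thetaA_le_arccos ha hdense hδ] with n hn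
  exact hn.trans_lt hδε

lemma tendsto_condNum_one {a : ℕ → E} (ha : ∀ i, ‖a i‖ = 1)
    (hdense : Metric.sphere (0 : E) 1 ⊆ closure (range a)) :
    Tendsto (fun n => condNum (fun i : Fin n => a i)) atTop (nhds 1) := by
  have hcont : ContinuousAt (fun t : ℝ => |cos t|⁻¹) 0 :=
    continuous_cos.abs.continuousAt.inv₀ (by simp)
  simpa [condNum, Function.comp_def] using hcont.tendsto.comp (tendsto_thetaA_zero ha hdense)

end Geometry

lemma measure_ball_eq_of_norm_eq {F : Type*} [NormedAddCommGroup F] [InnerProductSpace ℝ F]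
    [MeasurableSpace F] [BorelSpace F] {μ : Measure F} (hμ : ∀ L : F ≃ₗᵢ[ℝ] F, μ.map L = μ)
    {c c' : F} (h : ‖c‖ = ‖c'‖) (r : ℝ) : μ (Metric.ball c r) = μ (Metric.ball c' r) := by
  set L := (ℝ ∙ (c' - c))ᗮ.reflection
  calc μ (Metric.ball c r) = μ (L ⁻¹' Metric.ball c' r) := by
        rw [L.preimage_ball, Submodule.reflection_symm, Submodule.reflection_sub h.symm]
    _ = μ.map L (Metric.ball c' r) :=
        (Measure.map_apply L.continuous.measurable measurableSet_ball).symm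
    _ = μ (Metric.ball c' r) := by rw [hμ]

lemma exists_pos_le_measure_ball {m : ℕ} {r : ℝ} (hr : 0 < r) :
    ∃ p : ℝ≥0∞, 0 < p ∧ ∀ μ : Measure (EuclideanSpace ℝ (Fin m)), IsUniformOnSphere μ →
      ∀ c : EuclideanSpace ℝ (Fin m), ‖c‖ = 1 → p ≤ μ (Metric.ball c r) := by
  obtain ⟨T, hTS, hTfin, hcover⟩ := finite_cover_balls_of_compact
    (isCompact_sphere (0 : EuclideanSpace ℝ (Fin m)) 1) hr
  lift T to Finset (EuclideanSpace ℝ (Fin m)) using hTfin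
  refine ⟨(T.card : ℝ≥0∞)⁻¹, ENNReal.inv_pos.2 (ENNReal.natCast_ne_top _), fun μ hμ c hc => ?_⟩
  have : IsProbabilityMeasure μ := hμ.1
  have hcovered : 1 ≤ T.card * μ (Metric.ball c r) := calc
    1 = μ (Metric.sphere 0 1) :=
        ((prob_compl_eq_zero_iff Metric.isClosed_sphere.measurableSet).1 hμ.2.1).symm
    _ ≤ μ (⋃ d ∈ T, Metric.ball d r) := measure_mono (by simpa using hcover)
    _ ≤ ∑ d ∈ T, μ (Metric.ball d r) := measure_biUnion_finset_le _ _
    _ = ∑ _d ∈ T, μ (Metric.ball c r) := Finset.sum_congr rfl fun d hd =>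
        measure_ball_eq_of_norm_eq hμ.2.2 (by rw [hc, ← mem_sphere_zero_iff_norm]; exact hTS hd) r
    _ = T.card * μ (Metric.ball c r) := by rw [Finset.sum_const, nsmul_eq_mul]
  have hcard : (T.card : ℝ≥0∞) ≠ 0 := by rintro h; simp [h] at hcovered
  exact (ENNReal.inv_le_iff_le_mul (fun _ => hcard)
    (fun h => absurd h (ENNReal.natCast_ne_top _))).2 hcovered

lemma ae_exists_mem_of_iIndepFun {Ω β : Type*} [MeasurableSpace Ω] [MeasurableSpace β]
    {P : Measure Ω} [IsProbabilityMeasure P] {A : ℕ → Ω → β} (hmeas : ∀ i, Measurable (A i))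
    (hindep : iIndepFun A P) {S : Set β} (hS : MeasurableSet S) {p : ℝ≥0∞} (hp : 0 < p)
    (hle : ∀ i, p ≤ P (A i ⁻¹' S)) : ∀ᵐ ω ∂P, ∃ i, A i ω ∈ S := by
  have hmiss : ∀ n, P {ω | ∀ i, A i ω ∉ S} ≤ (1 - p) ^ n := fun n => calc
    P {ω | ∀ i, A i ω ∉ S} ≤ P (⋂ i ∈ Finset.range n, A i ⁻¹' Sᶜ) :=
        measure_mono fun _ hω => mem_iInter₂.2 fun i _ => hω i
    _ = ∏ i ∈ Finset.range n, P (A i ⁻¹' Sᶜ) :=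
        hindep.measure_inter_preimage_eq_mul _ fun _ _ => hS.compl
    _ ≤ ∏ _i ∈ Finset.range n, (1 - p) := Finset.prod_le_prod' fun i _ => by
        rw [preimage_compl, prob_compl_eq_one_sub (hmeas i hS)]
        exact tsub_le_tsub_left (hle i) 1
    _ = (1 - p) ^ n := by rw [Finset.prod_const, Finset.card_range]
  have hlt : 1 - p < 1 := ENNReal.sub_lt_self ENNReal.one_ne_top one_ne_zero hp.ne'
  rw [ae_iff]
  push Not
  exact le_antisymm (ge_of_tendsto' (ENNReal.tendsto_pow_atTop_nhds_zero_of_lt_one hlt) hmiss)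
    zero_le

lemma ae_forall_norm_eq_one {Ω : Type*} [MeasurableSpace Ω] {P : Measure Ω} {m : ℕ}
    {A : ℕ → Ω → EuclideanSpace ℝ (Fin m)} (hmeas : ∀ i, Measurable (A i))
    (hunif : ∀ i, IsUniformOnSphere (Measure.map (A i) P)) : ∀ᵐ ω ∂P, ∀ i, ‖A i ω‖ = 1 :=
  ae_all_iff.2 fun i => ae_of_ae_map (hmeas i).aemeasurable <|
    mem_of_superset (mem_ae_iff.2 (hunif i).2.1) fun _ hy => mem_sphere_zero_iff_norm.1 hy

lemma ae_sphere_subset_closure_range {Ω : Type*} [MeasurableSpace Ω] {P : Measure Ω}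
    [IsProbabilityMeasure P] {m : ℕ} {A : ℕ → Ω → EuclideanSpace ℝ (Fin m)}
    (hmeas : ∀ i, Measurable (A i)) (hindep : iIndepFun A P)
    (hunif : ∀ i, IsUniformOnSphere (Measure.map (A i) P)) :
    ∀ᵐ ω ∂P, Metric.sphere 0 1 ⊆ closure (range fun i => A i ω) := by
  obtain ⟨D, hDS, hDc, hSD⟩ :=
    (TopologicalSpace.IsSeparable.of_separableSpace (Metric.sphere
      (0 : EuclideanSpace ℝ (Fin m)) 1)).exists_countable_dense_subset
  have hhit : ∀ d ∈ D, ∀ k : ℕ, ∀ᵐ ω ∂P, ∃ i, A i ω ∈ Metric.ball d (1 / (k + 1)) := by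
    intro d hd k
    obtain ⟨p, hp, hple⟩ := exists_pos_le_measure_ball (m := m) (r := 1 / (k + 1)) (by positivity)
    refine ae_exists_mem_of_iIndepFun hmeas hindep measurableSet_ball hp fun i => ?_
    rw [← Measure.map_apply (hmeas i) measurableSet_ball]
    exact hple _ (hunif i) d (mem_sphere_zero_iff_norm.1 (hDS hd))
  filter_upwards [(ae_ball_iff hDc).2 fun d hd => ae_all_iff.2 (hhit d hd)] with ω hω
  refine hSD.trans (closure_minimal (fun d hd => Metric.mem_closure_iff.2 fun ε hε => ?_)
    isClosed_closure)
  obtain ⟨k, hk⟩ := exists_nat_one_div_lt hε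
  obtain ⟨i, hi⟩ := hω d hd k
  exact ⟨A i ω, ⟨i, rfl⟩, by rw [dist_comm]; exact (Metric.mem_ball.1 hi).trans hk⟩

theorem stmt19_general {Ω : Type*} [MeasurableSpace Ω] (P : Measure Ω) [IsProbabilityMeasure P]
    {m : ℕ}
    (A : ℕ → Ω → EuclideanSpace ℝ (Fin m))
    (hmeas : ∀ i, Measurable (A i))
    (hindep : iIndepFun A P)
    (hunif : ∀ i, IsUniformOnSphere (Measure.map (A i) P)) :
    P {ω | Tendsto (fun n : ℕ => condNum (fun i : Fin n => A i ω)) atTop (nhds 1)} = 1 := by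
  have hae : ∀ᵐ ω ∂P, Tendsto (fun n : ℕ => condNum (fun i : Fin n => A i ω)) atTop (nhds 1) := by
    filter_upwards [ae_forall_norm_eq_one hmeas hunif,
      ae_sphere_subset_closure_range hmeas hindep hunif] with ω hnorm hdense
    exact tendsto_condNum_one (a := fun i => A i ω) hnorm hdense
  exact (measure_congr (ae_eq_univ.2 hae)).trans measure_univ

theorem stmt19 {Ω : Type*} [MeasurableSpace Ω] (P : Measure Ω) [IsProbabilityMeasure P]
    {m : ℕ} (hm : 3 ≤ m)
    (A : ℕ → Ω → EuclideanSpace ℝ (Fin m))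
    (hmeas : ∀ i, Measurable (A i))
    (hindep : iIndepFun A P)
    (hunif : ∀ i, IsUniformOnSphere (Measure.map (A i) P)) :
    P {ω | Tendsto (fun n : ℕ => condNum (fun i : Fin n => A i ω)) atTop (nhds 1)} = 1 :=
  stmt19_general P A hmeas hindep hunif
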